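/- arXiv:2405.05942 — 2 statements merged into one kernel-verified Lean document; each statement's English description precedes it below -/
import Mathlib

section
/- If f is a monotone submodular function on subsets of a finite ground set V with f(∅)=0, c is a positive modular cost function, OPT ⊆ V, o* is an element of OPT with maximum cost, S ⊆ V satisfies c(S) ≤ c(OPT) − c(o*), and v ∈ OPT \ (S ∪ {o*}) maximizes the density f(e|S)/c(e) over all e ∈ OPT \ (S ∪ {o*}), then f(S ∪ {v}) − f(S) ≥ (c(v)/(c(OPT) − c(o*))) · (f(OPT) − f(S ∪ {o*})). -/
/-!
Let `d = f(v|S)/c(v)` be the best density and `R = OPT \ (S ∪ {o*})`. By submodularity the gain of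
adding all of `R` to `S ∪ {o*}` is at most `∑_{e ∈ R} f(e|S)`, and each of these marginals is at
most `c(e) d` by the choice of `v`. Monotonicity gives `f(OPT) - f(S ∪ {o*}) ≤ c(R) d`, and
`c(R) ≤ c(OPT) - c(o*)` because `o* ∉ R`. Multiplying by `c(v)` and dividing by `c(OPT) - c(o*)`
yields the claim, since `f(v|S) = c(v) d`.
-/

open Finset

section

variable {α : Type*} [DecidableEq α]

lemma sub_le_sum_marginal (f : Finset α → ℝ)
    (hsub : ∀ S T : Finset α, S ⊆ T → ∀ x ∉ T,
      f (insert x T) - f T ≤ f (insert x S) - f S)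
    {S T : Finset α} (hST : S ⊆ T) (R : Finset α) (hRT : Disjoint R T) :
    f (T ∪ R) - f T ≤ ∑ e ∈ R, (f (insert e S) - f S) := by
  induction R using Finset.induction_on with
  | empty => simp
  | @insert a R haR ih =>
    rw [disjoint_insert_left] at hRT
    have haTR : a ∉ T ∪ R := by simp [hRT.1, haR]
    have hstep := hsub S (T ∪ R) (hST.trans subset_union_left) a haTR
    rw [union_insert, sum_insert haR]
    linarith [ih hRT.2]

lemma sum_le_sum_mul_of_div_le {ι : Type*} (s : Finset ι) {g c : ι → ℝ} {d : ℝ}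
    (hc : ∀ i ∈ s, 0 < c i) (hg : ∀ i ∈ s, g i / c i ≤ d) :
    ∑ i ∈ s, g i ≤ (∑ i ∈ s, c i) * d := by
  rw [sum_mul]
  exact sum_le_sum fun i hi => by
    rw [mul_comm]
    exact (div_le_iff₀ (hc i hi)).mp (hg i hi)

lemma sum_sdiff_insert_le_sum_sub {c : α → ℝ} (hc : ∀ x, 0 ≤ c x) {s t : Finset α} {a : α}
    (ha : a ∈ s) : ∑ x ∈ s \ insert a t, c x ≤ (∑ x ∈ s, c x) - c a := by
  rw [← sum_erase_eq_sub ha]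
  refine sum_le_sum_of_subset_of_nonneg (fun x hx => ?_) fun x _ _ => hc x
  simp only [mem_sdiff, mem_insert, not_or] at hx
  exact mem_erase.mpr ⟨hx.2.1, hx.1⟩

end

theorem evoSMC_greedy_lemma_general
    {α : Type*} [DecidableEq α]
    (f : Finset α → ℝ) (c : α → ℝ)
    (hmono : ∀ S T : Finset α, S ⊆ T → f S ≤ f T)
    (hsub : ∀ S T : Finset α, S ⊆ T → ∀ x ∉ T,
      f (insert x T) - f T ≤ f (insert x S) - f S)
    (hc : ∀ x, 0 < c x)
    (OPT : Finset α)
    (ostar : α) (hostar : ostar ∈ OPT)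
    (S : Finset α)
    (v : α) (hv : v ∈ OPT \ insert ostar S)
    (hvmax : ∀ e ∈ OPT \ insert ostar S,
      (f (insert e S) - f S) / c e ≤ (f (insert v S) - f S) / c v) :
    f (insert v S) - f S ≥
      (c v / ((∑ x ∈ OPT, c x) - c ostar)) * (f OPT - f (insert ostar S)) := by
  set T := insert ostar S
  set R := OPT \ T
  set D := (∑ x ∈ OPT, c x) - c ostar
  set d := (f (insert v S) - f S) / c v
  have hd : 0 ≤ d := div_nonneg (sub_nonneg.mpr (hmono _ _ (subset_insert v S))) (hc v).le
  have hcR : ∑ e ∈ R, c e ≤ D := sum_sdiff_insert_le_sum_sub (fun x => (hc x).le) hostar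
  have hD : 0 < D := (hc v).trans_le <| (single_le_sum (fun x _ => (hc x).le) hv).trans hcR
  have hOPT : f OPT - f T ≤ D * d :=
    calc f OPT - f T ≤ f (T ∪ R) - f T := by
          gcongr
          apply hmono
          rw [union_sdiff_self_eq_union]
          exact subset_union_right
      _ ≤ ∑ e ∈ R, (f (insert e S) - f S) :=
          sub_le_sum_marginal f hsub (subset_insert _ _) R sdiff_disjoint
      _ ≤ (∑ e ∈ R, c e) * d := sum_le_sum_mul_of_div_le R (fun e _ => hc e) hvmax
      _ ≤ D * d := by gcongr
  have hgain : f (insert v S) - f S = c v * d := by rw [mul_div_cancel₀ _ (hc v).ne']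
  rw [hgain, ge_iff_le, div_mul_eq_mul_div, div_le_iff₀ hD]
  linarith [mul_le_mul_of_nonneg_left hOPT (hc v).le]

/-- the greedy density lemma (Lemma 2 / `lem:greedy`). -/
theorem evoSMC_greedy_lemma
    {α : Type*} [Fintype α] [DecidableEq α]
    (f : Finset α → ℝ) (c : α → ℝ)
    (hmono : ∀ S T : Finset α, S ⊆ T → f S ≤ f T)
    (hsub : ∀ S T : Finset α, S ⊆ T → ∀ x ∉ T,
      f (insert x T) - f T ≤ f (insert x S) - f S)
    (hf0 : f ∅ = 0)
    (hc : ∀ x, 0 < c x)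
    (OPT : Finset α) (hOPTne : OPT.Nonempty)
    (ostar : α) (hostar : ostar ∈ OPT)
    (hmaxcost : ∀ e ∈ OPT, c e ≤ c ostar)
    (S : Finset α)
    (hcS : ∑ x ∈ S, c x ≤ (∑ x ∈ OPT, c x) - c ostar)
    (v : α) (hv : v ∈ OPT \ insert ostar S)
    (hvmax : ∀ e ∈ OPT \ insert ostar S,
      (f (insert e S) - f S) / c e ≤ (f (insert v S) - f S) / c v) :
    f (insert v S) - f S ≥
      (c v / ((∑ x ∈ OPT, c x) - c ostar)) * (f OPT - f (insert ostar S)) :=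
  evoSMC_greedy_lemma_general f c hmono hsub hc OPT ostar hostar S v hv hvmax
end

section
/- Let f be monotone submodular with f(∅)=0 on finite V, c modular with positive element costs, S ⊆ V, o* ∉ S, and v ∈ OPT \ (S ∪ {o*}) maximizing f(e|S)/c(e) over e ∈ OPT \ (S ∪ {o*}). Then f(OPT) ≤ f(S ∪ {o*}) + (f(v|S)/c(v)) · Σ_{u ∈ OPT \ (S ∪ {o*})} c(u). -/
/-!
Add the elements of `OPT \ (S ∪ {o*})` one at a time to `S ∪ {o*}`: by submodularity each step
gains at most its marginal gain over `S`, and by the choice of `v` that gain is at most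
`f(v|S)/c(v)` times its cost. Monotonicity covers the elements of `OPT` already in `S ∪ {o*}`.
-/

open Finset

theorem le_add_sum_marginal_of_submodular {α : Type*} [DecidableEq α] (f : Finset α → ℝ)
    (hsub : ∀ S T : Finset α, S ⊆ T → ∀ x ∉ T,
      f (insert x T) - f T ≤ f (insert x S) - f S)
    {S T : Finset α} (hST : S ⊆ T) (B : Finset α) (hBT : Disjoint B T) :
    f (B ∪ T) ≤ f T + ∑ u ∈ B, (f (insert u S) - f S) := by
  induction B using Finset.induction_on with
  | empty => simp
  | @insert x B hxB ih =>
    rw [disjoint_insert_left] at hBT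
    have hx : x ∉ B ∪ T := by simp [hxB, hBT.1]
    have hstep := hsub S (B ∪ T) (hST.trans subset_union_right) x hx
    rw [insert_union, sum_insert hxB]
    linarith [ih hBT.2]

theorem sum_le_mul_sum_of_div_le {ι : Type*} (B : Finset ι) (g c : ι → ℝ) (r : ℝ)
    (hc : ∀ u ∈ B, 0 < c u) (hr : ∀ u ∈ B, g u / c u ≤ r) :
    ∑ u ∈ B, g u ≤ r * ∑ u ∈ B, c u := by
  rw [mul_sum]
  exact sum_le_sum fun u hu => (div_le_iff₀ (hc u hu)).1 (hr u hu)

theorem greedy_intermediate_bound_general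
    {α : Type*} [DecidableEq α]
    (f : Finset α → ℝ) (c : α → ℝ)
    (hmono : ∀ S T : Finset α, S ⊆ T → f S ≤ f T)
    (hsub : ∀ S T : Finset α, S ⊆ T → ∀ x ∉ T,
      f (insert x T) - f T ≤ f (insert x S) - f S)
    (hc : ∀ x, 0 < c x)
    (OPT S : Finset α) (ostar : α)
    (v : α)
    (hvmax : ∀ e ∈ OPT \ insert ostar S,
      (f (insert e S) - f S) / c e ≤ (f (insert v S) - f S) / c v) :
    f OPT ≤ f (insert ostar S) +
      ((f (insert v S) - f S) / c v) * ∑ u ∈ OPT \ insert ostar S, c u := by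
  calc f OPT ≤ f (OPT \ insert ostar S ∪ insert ostar S) :=
        hmono _ _ (sdiff_union_self_eq_union (s := OPT) ▸ subset_union_left)
    _ ≤ f (insert ostar S) + ∑ u ∈ OPT \ insert ostar S, (f (insert u S) - f S) :=
        le_add_sum_marginal_of_submodular f hsub (subset_insert ostar S) _ sdiff_disjoint
    _ ≤ _ := by
        gcongr
        exact sum_le_mul_sum_of_div_le _ _ c _ (fun u _ => hc u) hvmax

/-- intermediate bound in the greedy lemma. -/
theorem greedy_intermediate_bound
    {α : Type*} [Fintype α] [DecidableEq α]
    (f : Finset α → ℝ) (c : α → ℝ)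
    (hmono : ∀ S T : Finset α, S ⊆ T → f S ≤ f T)
    (hsub : ∀ S T : Finset α, S ⊆ T → ∀ x ∉ T,
      f (insert x T) - f T ≤ f (insert x S) - f S)
    (hf0 : f ∅ = 0)
    (hfnn : ∀ S : Finset α, 0 ≤ f S)
    (hc : ∀ x, 0 < c x)
    (OPT S : Finset α) (ostar : α) (hostar : ostar ∉ S)
    (v : α) (hv : v ∈ OPT \ insert ostar S)
    (hvmax : ∀ e ∈ OPT \ insert ostar S,
      (f (insert e S) - f S) / c e ≤ (f (insert v S) - f S) / c v) :
    f OPT ≤ f (insert ostar S) +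
      ((f (insert v S) - f S) / c v) * ∑ u ∈ OPT \ insert ostar S, c u :=
  greedy_intermediate_bound_general f c hmono hsub hc OPT S ostar v hvmax
end
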